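/- arXiv:2410.03477 — 2 statements merged into one kernel-verified Lean document; each statement's English description precedes it below -/
import Mathlib

section
/- For R ∈ ℕ, define nn(x) = (x+R)₊ - (x-R)₊ + 2·∑_{k=1}^{2R} [(x + R + 1/4 - k)₊ - (x + R + 3/4 - k)₊], where (t)₊ = max(t, 0). Then nn(x) = φ(x)·𝟙{x ∈ [-R, R]} for all real x, where φ(x) = |x - 3/4 - ⌊x - 1/4⌋| - 1/4. -/
noncomputable def phi (x : ℝ) : ℝ := |x - 3/4 - ⌊x - 1/4⌋| - 1/4

noncomputable def nn (R : ℕ) (x : ℝ) : ℝ :=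
  max (x + R) 0 - max (x - R) 0 +
    2 * ∑ k ∈ Finset.Icc 1 (2 * R),
      (max (x + R + 1/4 - k) 0 - max (x + R + 3/4 - k) 0)

/-!
With `y = x + R` the network becomes `∑_{j < 2R} h (y - j)`, where
`h t = t₊ - (t - 1)₊ + 2 ((t - 3/4)₊ - (t - 1/4)₊)` is a single tooth of the triangle wave:
`φ` on `[0, 1)` and `0` elsewhere. Since `φ` is `1`-periodic, the translated teeth glue together
to `φ` on `[0, 2R)`, and the closed right endpoint costs nothing because `φ` vanishes at integers.
-/

open Set

theorem phi_periodic : Function.Periodic phi 1 := by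
  intro x
  simp only [phi, show x + 1 - 1/4 = x - 1/4 + 1 by ring, Int.floor_add_one]
  push_cast
  ring_nf

theorem phi_add_natCast (y : ℝ) (n : ℕ) : phi (y + n) = phi y := by
  simpa using phi_periodic.nat_mul n y

theorem phi_sub_natCast (y : ℝ) (n : ℕ) : phi (y - n) = phi y := by
  simpa using phi_periodic.sub_nat_mul_eq (x := y) n

theorem phi_natCast (n : ℕ) : phi n = 0 := by
  have hfloor : ⌊(0 : ℝ) - 1/4⌋ = -1 := by norm_num [Int.floor_eq_iff]
  rw [← zero_add (n : ℝ), phi_add_natCast, phi, hfloor]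
  norm_num

theorem indicator_Ico_phi_natCast (N : ℕ) :
    (Ico 0 (N : ℝ)).indicator phi = (Icc 0 (N : ℝ)).indicator phi := by
  ext y
  by_cases hy : y = N
  · simp [hy, phi_natCast]
  · simp only [indicator_apply, mem_Ico, mem_Icc, lt_iff_le_and_ne, ne_eq, hy, not_false_eq_true,
      and_true]

noncomputable def phiPiece (t : ℝ) : ℝ :=
  max t 0 - max (t - 1) 0 + 2 * (max (t - 3/4) 0 - max (t - 1/4) 0)

theorem phiPiece_eq_indicator (t : ℝ) : phiPiece t = (Ico 0 1).indicator phi t := by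
  by_cases ht : t ∈ Ico 0 1
  · rw [indicator_of_mem ht]
    obtain ⟨ht0, ht1⟩ := ht
    have hfloor : (⌊t - 1/4⌋ : ℝ) = if t < 1/4 then -1 else 0 := by
      split_ifs
      · rw [show ⌊t - 1/4⌋ = -1 by rw [Int.floor_eq_iff]; norm_num; constructor <;> linarith]
        norm_num
      · rw [show ⌊t - 1/4⌋ = 0 by rw [Int.floor_eq_iff]; norm_num; constructor <;> linarith]
        norm_num
    simp only [phiPiece, phi, hfloor, max_def, abs_eq_max_neg]
    split_ifs <;> linarith
  · rw [indicator_of_notMem ht]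
    simp only [mem_Ico, not_and_or, not_le, not_lt] at ht
    simp only [phiPiece, max_def]
    split_ifs <;> rcases ht with ht | ht <;> linarith

noncomputable def nnShifted (N : ℕ) (y : ℝ) : ℝ :=
  max y 0 - max (y - N) 0 +
    2 * ∑ k ∈ Finset.Icc 1 N, (max (y + 1/4 - k) 0 - max (y + 3/4 - k) 0)

theorem nn_eq_nnShifted (R : ℕ) (x : ℝ) : nn R x = nnShifted (2 * R) (x + R) := by
  simp only [nn, nnShifted]
  push_cast
  ring_nf

theorem nnShifted_succ (N : ℕ) (y : ℝ) :
    nnShifted (N + 1) y = nnShifted N y + phiPiece (y - N) := by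
  simp only [nnShifted, phiPiece, Finset.sum_Icc_succ_top (Nat.le_add_left 1 N)]
  push_cast
  ring_nf

theorem nnShifted_eq_indicator (N : ℕ) (y : ℝ) :
    nnShifted N y = (Ico 0 (N : ℝ)).indicator phi y := by
  induction N with
  | zero => simp [nnShifted]
  | succ N ih =>
    have hunion : Ico 0 (N : ℝ) ∪ Ico (N : ℝ) (N + 1) = Ico 0 ((N + 1 : ℕ) : ℝ) := by
      push_cast; exact Ico_union_Ico_eq_Ico (by positivity) (by linarith)
    have hlast : (Ico (N : ℝ) (N + 1)).indicator phi y = (Ico 0 1).indicator phi (y - N) := by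
      have hmem : y ∈ Ico (N : ℝ) (N + 1) ↔ y - N ∈ Ico 0 1 := by
        simp only [mem_Ico, sub_nonneg, sub_lt_iff_lt_add']
      simp only [indicator_apply, hmem, phi_sub_natCast]
    rw [nnShifted_succ, ih, phiPiece_eq_indicator, ← hlast, ← hunion,
      indicator_union_of_disjoint Ico_disjoint_Ico_same]

theorem nn_eq_phi_indicator_general (R : ℕ) (x : ℝ) :
    nn R x = Set.indicator (Set.Icc (-(R : ℝ)) R) phi x := by
  rw [nn_eq_nnShifted, nnShifted_eq_indicator, indicator_Ico_phi_natCast]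
  have hmem : x + R ∈ Icc 0 ((2 * R : ℕ) : ℝ) ↔ x ∈ Icc (-(R : ℝ)) R := by
    push_cast
    simp only [mem_Icc]
    constructor <;> rintro ⟨h1, h2⟩ <;> constructor <;> linarith
  simp only [indicator_apply, hmem, phi_add_natCast]

theorem nn_eq_phi_indicator (R : ℕ) (hR : 0 < R) (x : ℝ) :
    nn R x = Set.indicator (Set.Icc (-(R : ℝ)) R) phi x :=
  nn_eq_phi_indicator_general R x
end

section
/- Let φ: ℝ → ℝ be 1-Lipschitz, let γ > 0, w a fixed unit vector in ℝ^d, and let x ∼ N(0, I_d), ξ₀ ∼ N(0, β), ξ ∼ N(0, σ²) be independent. Then the total variation distance between the joint distributions of (x, φ(γ⟨w,x⟩ + ξ₀) + ξ) and (x, φ(γ⟨w,x⟩) + ξ) is at most √β/(√(2π)·σ). -/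
open MeasureTheory ProbabilityTheory NNReal Set Real
open scoped ENNReal

/-!
Conditionally on `(x, ξ₀)`, the two observations are Gaussians of variance `σ²` centred at
`φ (γ ⟪w, x⟫ + ξ₀)` and `φ (γ ⟪w, x⟫)`, whose means differ by at most `|ξ₀|` since `φ` is
1-Lipschitz. Two Gaussians of variance `v` whose means `a ≤ b` differ by `c` are
`c / √(2πv)`-close in total variation: the density of `N(b, v)` dominates exactly on the
half-line `[(a + b)/2, ∞)`, and the difference of the masses of that half-line is the
`N(a, v)`-mass of an interval of length `c`, at most `c` times the maximal density. Averaging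
over `(x, ξ₀)` bounds the distance by `E|ξ₀| / (√(2π) σ)`, and `E|ξ₀| ≤ √(E ξ₀²) = √β`.
-/

lemma setIntegral_le_setIntegral_of_nonneg_on_of_nonpos_off {α : Type*} [MeasurableSpace α]
    {μ : Measure α} {f : α → ℝ} {P : Set α} (hf : Integrable f μ) (hP : MeasurableSet P)
    (hpos : ∀ x ∈ P, 0 ≤ f x) (hneg : ∀ x ∉ P, f x ≤ 0) (B : Set α) :
    ∫ x in B, f x ∂μ ≤ ∫ x in P, f x ∂μ := by
  have hle : f ≤ P.indicator f := fun x => by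
    by_cases hx : x ∈ P
    · simp [hx]
    · simpa [hx] using hneg x hx
  calc ∫ x in B, f x ∂μ ≤ ∫ x in B, P.indicator f x ∂μ :=
        setIntegral_mono hf.integrableOn ((hf.indicator hP).integrableOn) hle
    _ ≤ ∫ x, P.indicator f x ∂μ :=
        setIntegral_le_integral (hf.indicator hP)
          (Filter.Eventually.of_forall (indicator_nonneg hpos))
    _ = ∫ x in P, f x ∂μ := integral_indicator hP

namespace ProbabilityTheory

lemma gaussianPDFReal_le_inv_sqrt (m : ℝ) (v : ℝ≥0) (x : ℝ) :
    gaussianPDFReal m v x ≤ (√(2 * π * v))⁻¹ := by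
  rw [gaussianPDFReal]
  refine mul_le_of_le_one_right (by positivity) (Real.exp_le_one_iff.2 ?_)
  exact div_nonpos_of_nonpos_of_nonneg (neg_nonpos.2 (sq_nonneg _)) (by positivity)

lemma gaussianPDFReal_le_of_sq_le {v : ℝ≥0} {a b x : ℝ} (h : (x - b) ^ 2 ≤ (x - a) ^ 2) :
    gaussianPDFReal a v x ≤ gaussianPDFReal b v x := by
  simp only [gaussianPDFReal]
  gcongr

lemma gaussianReal_real_apply (m : ℝ) {v : ℝ≥0} (hv : v ≠ 0) (A : Set ℝ) :
    (gaussianReal m v).real A = ∫ x in A, gaussianPDFReal m v x := by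
  rw [measureReal_def, gaussianReal_apply_eq_integral m hv A,
    ENNReal.toReal_ofReal (integral_nonneg (gaussianPDFReal_nonneg m v))]

lemma gaussianReal_real_Ico_le (m : ℝ) {v : ℝ≥0} (hv : v ≠ 0) {a b : ℝ} (hab : a ≤ b) :
    (gaussianReal m v).real (Ico a b) ≤ (b - a) / √(2 * π * v) := by
  rw [gaussianReal_real_apply m hv]
  calc ∫ x in Ico a b, gaussianPDFReal m v x ≤ ∫ _ in Ico a b, (√(2 * π * v))⁻¹ :=
        setIntegral_mono_on (integrable_gaussianPDFReal m v).integrableOn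
          (integrableOn_const measure_Ico_lt_top.ne) measurableSet_Ico
          fun x _ => gaussianPDFReal_le_inv_sqrt m v x
    _ = (b - a) / √(2 * π * v) := by
        rw [setIntegral_const, Real.volume_real_Ico_of_le hab, smul_eq_mul, div_eq_mul_inv]

lemma gaussianReal_add_real_Ici (m c x : ℝ) (v : ℝ≥0) :
    (gaussianReal (m + c) v).real (Ici x) = (gaussianReal m v).real (Ici (x - c)) := by
  rw [← gaussianReal_map_add_const, map_measureReal_apply (measurable_add_const c)
    measurableSet_Ici, preimage_add_const_Ici]

lemma gaussianReal_real_sub_le_of_le {v : ℝ≥0} (hv : v ≠ 0) {a b : ℝ} (hab : a ≤ b)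
    (B : Set ℝ) :
    (gaussianReal b v).real B - (gaussianReal a v).real B ≤ (b - a) / √(2 * π * v) := by
  set m := (a + b) / 2
  have hsplit : (gaussianReal b v).real B - (gaussianReal a v).real B
      ≤ (gaussianReal b v).real (Ici m) - (gaussianReal a v).real (Ici m) := by
    simp only [gaussianReal_real_apply _ hv,
      ← integral_sub (integrable_gaussianPDFReal _ _).integrableOn
        (integrable_gaussianPDFReal _ _).integrableOn]
    refine setIntegral_le_setIntegral_of_nonneg_on_of_nonpos_off
      ((integrable_gaussianPDFReal b v).sub (integrable_gaussianPDFReal a v)) measurableSet_Ici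
      (fun x hx => sub_nonneg.2 (gaussianPDFReal_le_of_sq_le ?_))
      (fun x hx => sub_nonpos.2 (gaussianPDFReal_le_of_sq_le ?_)) B
    · simp only [mem_Ici, m] at hx; nlinarith
    · simp only [mem_Ici, not_le, m] at hx; nlinarith
  have htail : (gaussianReal b v).real (Ici m) - (gaussianReal a v).real (Ici m)
      = (gaussianReal a v).real (Ico (m - (b - a)) m) := by
    rw [← Ici_sdiff_Ici, measureReal_sdiff (Ici_subset_Ici.2 (by linarith)) measurableSet_Ici,
      ← gaussianReal_add_real_Ici, add_sub_cancel]
  have hIco := gaussianReal_real_Ico_le a hv (sub_le_self m (sub_nonneg.2 hab))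
  rw [sub_sub_cancel] at hIco
  linarith

lemma abs_gaussianReal_real_sub_le {v : ℝ≥0} (hv : v ≠ 0) (a b : ℝ) {B : Set ℝ}
    (hB : MeasurableSet B) :
    |(gaussianReal a v).real B - (gaussianReal b v).real B| ≤ |a - b| / √(2 * π * v) := by
  wlog hab : b ≤ a generalizing a b
  · rw [abs_sub_comm, abs_sub_comm a]
    exact this b a (le_of_not_ge hab)
  rw [abs_of_nonneg (sub_nonneg.2 hab), abs_le]
  refine ⟨?_, gaussianReal_real_sub_le_of_le hv hab B⟩
  have := gaussianReal_real_sub_le_of_le hv hab Bᶜ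
  rw [probReal_compl_eq_one_sub hB, probReal_compl_eq_one_sub hB] at this
  linarith

lemma gaussianReal_le_add_ofReal {v : ℝ≥0} (hv : v ≠ 0) (a b : ℝ) {B : Set ℝ}
    (hB : MeasurableSet B) :
    gaussianReal a v B ≤ gaussianReal b v B + ENNReal.ofReal (|a - b| / √(2 * π * v)) := by
  rw [← ofReal_measureReal, ← ofReal_measureReal]
  calc ENNReal.ofReal ((gaussianReal a v).real B)
      ≤ ENNReal.ofReal ((gaussianReal b v).real B + |a - b| / √(2 * π * v)) :=
        ENNReal.ofReal_le_ofReal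
          (by linarith [(abs_le.1 (abs_gaussianReal_real_sub_le hv a b hB)).2])
    _ ≤ _ := ENNReal.ofReal_add_le

section GaussianNoise

variable {Z X : Type*} [MeasurableSpace Z] [MeasurableSpace X] (ρ : Measure Z)
  {q : Z → X} {f g : Z → ℝ} {v : ℝ≥0} {s : Set (X × ℝ)}

lemma map_prod_gaussianReal_apply [SFinite ρ] (hq : Measurable q) (hf : Measurable f)
    (hs : MeasurableSet s) :
    (ρ.prod (gaussianReal 0 v)).map (fun p => (q p.1, f p.1 + p.2)) s
      = ∫⁻ z, gaussianReal (f z) v {t | (q z, t) ∈ s} ∂ρ := by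
  have hmeas : Measurable fun p : Z × ℝ => (q p.1, f p.1 + p.2) := by fun_prop
  rw [Measure.map_apply hmeas hs, Measure.prod_apply (hmeas hs)]
  refine lintegral_congr fun z => ?_
  have hslice : MeasurableSet {t | (q z, t) ∈ s} := measurable_prodMk_left hs
  rw [← zero_add (f z), ← gaussianReal_map_const_add,
    Measure.map_apply (measurable_const_add _) hslice]
  rfl

lemma map_prod_gaussianReal_le_add [SFinite ρ] (hq : Measurable q) (hf : Measurable f)
    (hg : Measurable g) (hv : v ≠ 0) (hs : MeasurableSet s) :
    (ρ.prod (gaussianReal 0 v)).map (fun p => (q p.1, f p.1 + p.2)) s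
      ≤ (ρ.prod (gaussianReal 0 v)).map (fun p => (q p.1, g p.1 + p.2)) s
        + ∫⁻ z, ENNReal.ofReal (|f z - g z| / √(2 * π * v)) ∂ρ := by
  rw [map_prod_gaussianReal_apply ρ hq hf hs, map_prod_gaussianReal_apply ρ hq hg hs,
    ← lintegral_add_right _ (by fun_prop)]
  exact lintegral_mono fun z => gaussianReal_le_add_ofReal hv _ _ (measurable_prodMk_left hs)

lemma abs_map_prod_gaussianReal_real_sub_le [IsFiniteMeasure ρ] (hq : Measurable q)
    (hf : Measurable f) (hg : Measurable g) (hfg : Integrable (fun z => f z - g z) ρ)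
    (hv : v ≠ 0) (hs : MeasurableSet s) :
    |((ρ.prod (gaussianReal 0 v)).map (fun p => (q p.1, f p.1 + p.2))).real s
      - ((ρ.prod (gaussianReal 0 v)).map (fun p => (q p.1, g p.1 + p.2))).real s|
      ≤ (∫ z, |f z - g z| ∂ρ) / √(2 * π * v) := by
  have hbound : ∫⁻ z, ENNReal.ofReal (|f z - g z| / √(2 * π * v)) ∂ρ
      = ENNReal.ofReal ((∫ z, |f z - g z| ∂ρ) / √(2 * π * v)) := by
    rw [← integral_div, ofReal_integral_eq_lintegral_ofReal (hfg.abs.div_const _)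
      (Filter.Eventually.of_forall fun z => by positivity)]
  have hfg_le := map_prod_gaussianReal_le_add ρ hq hf hg hv hs
  have hgf_le := map_prod_gaussianReal_le_add ρ hq hg hf hv hs
  simp_rw [abs_sub_comm (g _)] at hgf_le
  rw [hbound] at hfg_le hgf_le
  have hr : 0 ≤ (∫ z, |f z - g z| ∂ρ) / √(2 * π * v) := by positivity
  have h₁ := ENNReal.toReal_le_add hfg_le (measure_ne_top _ _) ENNReal.ofReal_ne_top
  have h₂ := ENNReal.toReal_le_add hgf_le (measure_ne_top _ _) ENNReal.ofReal_ne_top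
  rw [ENNReal.toReal_ofReal hr] at h₁ h₂
  rw [abs_le]
  constructor <;> simp only [measureReal_def] <;> linarith

end GaussianNoise

lemma integral_abs_le_sqrt_integral_sq {Ω : Type*} [MeasurableSpace Ω] {μ : Measure Ω}
    [IsProbabilityMeasure μ] {X : Ω → ℝ} (hX : MemLp X 2 μ) :
    ∫ ω, |X ω| ∂μ ≤ √(∫ ω, X ω ^ 2 ∂μ) := by
  have hvar := variance_nonneg |X| μ
  rw [variance_eq_sub hX.abs] at hvar
  simp only [Pi.pow_apply, Pi.abs_apply, sq_abs] at hvar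
  exact Real.le_sqrt_of_sq_le (by linarith)

lemma integral_sq_gaussianReal (m : ℝ) (v : ℝ≥0) :
    ∫ x, x ^ 2 ∂gaussianReal m v = m ^ 2 + v := by
  have h := variance_eq_sub (memLp_id_gaussianReal (μ := m) (v := v) 2)
  simp only [Pi.pow_apply, id_eq] at h
  rw [variance_id_gaussianReal, integral_id_gaussianReal] at h
  linarith

lemma integral_abs_gaussianReal_le (v : ℝ≥0) : ∫ x, |x| ∂gaussianReal 0 v ≤ √v := by
  simpa [integral_sq_gaussianReal] using
    integral_abs_le_sqrt_integral_sq (memLp_id_gaussianReal (μ := 0) (v := v) 2)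

end ProbabilityTheory

theorem tv_gaussianize_general (d : ℕ) (φ : ℝ → ℝ) (hφ : LipschitzWith 1 φ)
    (γ : ℝ) (w : Fin d → ℝ)
    (β : ℝ≥0) (σ : ℝ) (hσ : 0 < σ) :
    ∀ s : Set ((Fin d → ℝ) × ℝ), MeasurableSet s →
      |((Measure.map
            (fun p : (Fin d → ℝ) × ℝ × ℝ =>
              (p.1, φ (γ * ∑ i, w i * p.1 i + p.2.1) + p.2.2))
            ((Measure.pi fun _ : Fin d => gaussianReal 0 1).prod
              ((gaussianReal 0 β).prod (gaussianReal 0 (Real.toNNReal (σ ^ 2)))))) s).toReal -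
        ((Measure.map
            (fun p : (Fin d → ℝ) × ℝ × ℝ =>
              (p.1, φ (γ * ∑ i, w i * p.1 i) + p.2.2))
            ((Measure.pi fun _ : Fin d => gaussianReal 0 1).prod
              ((gaussianReal 0 β).prod (gaussianReal 0 (Real.toNNReal (σ ^ 2)))))) s).toReal|
        ≤ Real.sqrt β / (Real.sqrt (2 * Real.pi) * σ) := by
  intro s hs
  set μ := (Measure.pi fun _ : Fin d => gaussianReal 0 1).prod (gaussianReal 0 β)
  set a : (Fin d → ℝ) → ℝ := fun x => γ * ∑ i, w i * x i
  have hφm : Measurable φ := hφ.continuous.measurable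
  have hV : (σ ^ 2).toNNReal ≠ 0 := by simp [hσ.ne']
  have hlip (z : (Fin d → ℝ) × ℝ) : |φ (a z.1 + z.2) - φ (a z.1)| ≤ |z.2| := by
    simpa [Real.dist_eq] using hφ.dist_le_mul (a z.1 + z.2) (a z.1)
  have habs : Integrable (fun z : (Fin d → ℝ) × ℝ => |z.2|) μ :=
    ((memLp_id_gaussianReal 1).integrable le_rfl).abs.comp_snd _
  have hint : Integrable (fun z : (Fin d → ℝ) × ℝ => φ (a z.1 + z.2) - φ (a z.1)) μ :=
    habs.mono' (by fun_prop) (Filter.Eventually.of_forall hlip)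
  simp only [← measureReal_def, ← Measure.prodAssoc_prod]
  rw [Measure.map_map (by fun_prop) MeasurableEquiv.prodAssoc.measurable,
    Measure.map_map (by fun_prop) MeasurableEquiv.prodAssoc.measurable]
  calc _ ≤ (∫ z, |φ (a z.1 + z.2) - φ (a z.1)| ∂μ) / √(2 * π * (σ ^ 2).toNNReal) :=
        abs_map_prod_gaussianReal_real_sub_le μ measurable_fst (by fun_prop) (by fun_prop)
          hint hV hs
    _ ≤ (∫ z, |z.2| ∂μ) / √(2 * π * (σ ^ 2).toNNReal) :=
        div_le_div_of_nonneg_right (integral_mono hint.abs habs hlip) (by positivity)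
    _ ≤ √β / √(2 * π * (σ ^ 2).toNNReal) := by
        rw [integral_fun_snd]
        exact div_le_div_of_nonneg_right (by simpa [μ] using integral_abs_gaussianReal_le β)
          (by positivity)
    _ = √β / (√(2 * π) * σ) := by
        rw [Real.coe_toNNReal _ (sq_nonneg σ), Real.sqrt_mul (by positivity), Real.sqrt_sq hσ.le]

theorem tv_gaussianize (d : ℕ) (φ : ℝ → ℝ) (hφ : LipschitzWith 1 φ)
    (γ : ℝ) (hγ : 0 < γ) (w : Fin d → ℝ) (hw : ∑ i, w i ^ 2 = 1)
    (β : ℝ≥0) (hβ : 0 < β) (σ : ℝ) (hσ : 0 < σ) :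
    ∀ s : Set ((Fin d → ℝ) × ℝ), MeasurableSet s →
      |((Measure.map
            (fun p : (Fin d → ℝ) × ℝ × ℝ =>
              (p.1, φ (γ * ∑ i, w i * p.1 i + p.2.1) + p.2.2))
            ((Measure.pi fun _ : Fin d => gaussianReal 0 1).prod
              ((gaussianReal 0 β).prod (gaussianReal 0 (Real.toNNReal (σ ^ 2)))))) s).toReal -
        ((Measure.map
            (fun p : (Fin d → ℝ) × ℝ × ℝ =>
              (p.1, φ (γ * ∑ i, w i * p.1 i) + p.2.2))
            ((Measure.pi fun _ : Fin d => gaussianReal 0 1).prod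
              ((gaussianReal 0 β).prod (gaussianReal 0 (Real.toNNReal (σ ^ 2)))))) s).toReal|
        ≤ Real.sqrt β / (Real.sqrt (2 * Real.pi) * σ) :=
  tv_gaussianize_general d φ hφ γ w β σ hσ
end
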